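/- Let a, b, c be real numbers. For every twice continuously differentiable function f : ℝ → Mat₃(ℝ) and every x ∈ ℝ, setting g(y) = f(y)·T(y) with T(y) = [[1, ay, 0],[0,1,0],[0, cy, 1]], one has f''(x) + f'(x)·F₁(x) + f(x)·F₀ = ( g''(x) + g'(x)·diag(2b-2x, -2x, -2x) + g(x)·diag(0, 2, 0) ) · T(x)⁻¹, where T(x)⁻¹ = [[1, -ax, 0],[0,1,0],[0, -cx, 1]]. That is, D₁ = T·diag(∂²+∂(-2x+2b), ∂²+∂(-2x)+2, ∂²+∂(-2x))·T⁻¹. -/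

import Mathlib

open Matrix

/-- The polynomial matrix T(x). -/
noncomputable def T (a c : ℝ) (x : ℝ) : Matrix (Fin 3) (Fin 3) ℝ :=
  !![1, a * x, 0; 0, 1, 0; 0, c * x, 1]

/-- The inverse T(x)⁻¹. -/
noncomputable def Tinv (a c : ℝ) (x : ℝ) : Matrix (Fin 3) (Fin 3) ℝ :=
  !![1, -a * x, 0; 0, 1, 0; 0, -c * x, 1]

/-- First-order coefficient of the operator D₁. -/
noncomputable def F1 (a b c : ℝ) (x : ℝ) : Matrix (Fin 3) (Fin 3) ℝ :=
  !![2 * b - 2 * x, -2 * a * b * x + 2 * a, 0;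
     0, -2 * x, 0;
     0, 2 * c, -2 * x]

/-- Zeroth-order coefficient of the operator D₁. -/
noncomputable def F0 : Matrix (Fin 3) (Fin 3) ℝ :=
  !![0, 0, 0; 0, 2, 0; 0, 0, 0]

/-- Entrywise derivative of a matrix-valued function. -/
noncomputable def mderiv (f : ℝ → Matrix (Fin 3) (Fin 3) ℝ) (x : ℝ) :
    Matrix (Fin 3) (Fin 3) ℝ :=
  Matrix.of fun i j => deriv (fun y => f y i j) x

/-!
Since `g = f T` and `T(y) = 1 + y T'` is affine, the Leibniz rule gives `g' = f' T + f T'` and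
`g'' = f'' T + 2 f' T'`. Substituting, the right-hand side becomes
`f'' (T T⁻¹) + f' ((2 T' + T Λ₁) T⁻¹) + f ((T' Λ₁ + T Λ₀) T⁻¹)`, with `Λ₁, Λ₀` the two diagonal
matrices, and the three constant-coefficient products are `1`, `F₁(x)` and `F₀`.
-/

section EntrywiseDeriv

variable {m n p : Type*}

def HasEntrywiseDerivAt (f : ℝ → Matrix m n ℝ) (f' : Matrix m n ℝ) (x : ℝ) : Prop :=
  ∀ i j, HasDerivAt (fun y => f y i j) (f' i j) x

theorem HasEntrywiseDerivAt.add {f g : ℝ → Matrix m n ℝ} {f' g' : Matrix m n ℝ} {x : ℝ}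
    (hf : HasEntrywiseDerivAt f f' x) (hg : HasEntrywiseDerivAt g g' x) :
    HasEntrywiseDerivAt (fun y => f y + g y) (f' + g') x :=
  fun i j => (hf i j).add (hg i j)

theorem HasEntrywiseDerivAt.mul [Fintype n] {f : ℝ → Matrix m n ℝ} {g : ℝ → Matrix n p ℝ}
    {f' : Matrix m n ℝ} {g' : Matrix n p ℝ} {x : ℝ}
    (hf : HasEntrywiseDerivAt f f' x) (hg : HasEntrywiseDerivAt g g' x) :
    HasEntrywiseDerivAt (fun y => f y * g y) (f' * g x + f x * g') x := by
  intro i k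
  simp only [Matrix.add_apply, Matrix.mul_apply, ← Finset.sum_add_distrib]
  exact HasDerivAt.fun_sum fun j _ => (hf i j).mul (hg j k)

theorem hasEntrywiseDerivAt_const (A : Matrix m n ℝ) (x : ℝ) :
    HasEntrywiseDerivAt (fun _ => A) 0 x :=
  fun i j => hasDerivAt_const x (A i j)

theorem hasEntrywiseDerivAt_add_smul (A B : Matrix m n ℝ) (x : ℝ) :
    HasEntrywiseDerivAt (fun y => A + y • B) B x := by
  intro i j
  simpa using ((hasDerivAt_id x).mul_const (B i j)).const_add (A i j)

end EntrywiseDeriv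

theorem HasEntrywiseDerivAt.mderiv_eq {f : ℝ → Matrix (Fin 3) (Fin 3) ℝ}
    {f' : Matrix (Fin 3) (Fin 3) ℝ} {x : ℝ} (hf : HasEntrywiseDerivAt f f' x) :
    mderiv f x = f' := by
  ext i j
  exact (hf i j).deriv

theorem hasEntrywiseDerivAt_mderiv {f : ℝ → Matrix (Fin 3) (Fin 3) ℝ}
    (hf : ∀ i j, Differentiable ℝ (fun x => f x i j)) (x : ℝ) :
    HasEntrywiseDerivAt f (mderiv f x) x :=
  fun i j => (hf i j x).hasDerivAt

theorem differentiable_mderiv_apply {f : ℝ → Matrix (Fin 3) (Fin 3) ℝ}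
    (hf : ∀ i j, ContDiff ℝ 2 (fun x => f x i j)) (i j : Fin 3) :
    Differentiable ℝ (fun x => mderiv f x i j) :=
  (hf i j).differentiable_deriv_two

def Tderiv (a c : ℝ) : Matrix (Fin 3) (Fin 3) ℝ :=
  !![0, a, 0; 0, 0, 0; 0, c, 0]

theorem T_eq_one_add_smul (a c x : ℝ) : T a c x = 1 + x • Tderiv a c := by
  ext i j
  fin_cases i <;> fin_cases j <;> simp [T, Tderiv, mul_comm]

theorem hasEntrywiseDerivAt_T (a c x : ℝ) : HasEntrywiseDerivAt (T a c) (Tderiv a c) x := by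
  rw [show T a c = fun y => 1 + y • Tderiv a c from funext (T_eq_one_add_smul a c)]
  exact hasEntrywiseDerivAt_add_smul 1 (Tderiv a c) x

theorem T_mul_Tinv (a c x : ℝ) : T a c x * Tinv a c x = 1 := by
  ext i j
  fin_cases i <;> fin_cases j <;> simp [T, Tinv, Matrix.mul_apply, Fin.sum_univ_three]

theorem F1_eq_conj (a b c x : ℝ) :
    F1 a b c x = (2 • Tderiv a c + T a c x * Matrix.diagonal ![2 * b - 2 * x, -2 * x, -2 * x])
      * Tinv a c x := by
  ext i j
  simp only [Matrix.mul_apply, Matrix.add_apply, Matrix.smul_apply, Fin.sum_univ_three,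
    Matrix.diagonal_apply]
  fin_cases i <;> fin_cases j <;> simp [F1, T, Tinv, Tderiv] <;> ring

theorem F0_eq_conj (a b c x : ℝ) :
    F0 = (Tderiv a c * Matrix.diagonal ![2 * b - 2 * x, -2 * x, -2 * x]
      + T a c x * Matrix.diagonal ![0, 2, 0]) * Tinv a c x := by
  ext i j
  simp only [Matrix.mul_apply, Matrix.add_apply, Fin.sum_univ_three, Matrix.diagonal_apply]
  fin_cases i <;> fin_cases j <;> simp [F0, T, Tinv, Tderiv] <;> ring

/-- the conjugation formula
D₁ = T·diag(∂²+∂(-2x+2b), ∂²+∂(-2x)+2, ∂²+∂(-2x))·T⁻¹: for every C²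
matrix-valued function f, with g(y) = f(y)·T(y),
f''(x) + f'(x)·F₁(x) + f(x)·F₀
  = (g''(x) + g'(x)·diag(2b-2x, -2x, -2x) + g(x)·diag(0,2,0))·T(x)⁻¹. -/
theorem D1_conjugated (a b c : ℝ) (f : ℝ → Matrix (Fin 3) (Fin 3) ℝ)
    (hf : ∀ i j, ContDiff ℝ 2 (fun x => f x i j))
    (g : ℝ → Matrix (Fin 3) (Fin 3) ℝ) (hg : ∀ y, g y = f y * T a c y) (x : ℝ) :
    mderiv (mderiv f) x + mderiv f x * F1 a b c x + f x * F0
      = (mderiv (mderiv g) x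
          + mderiv g x * Matrix.diagonal ![2 * b - 2 * x, -2 * x, -2 * x]
          + g x * Matrix.diagonal ![0, 2, 0]) * Tinv a c x := by
  have hf₀ : ∀ i j, Differentiable ℝ (fun y => f y i j) := fun i j =>
    (hf i j).differentiable two_ne_zero
  have hf₁ := differentiable_mderiv_apply hf
  have hg₁ : ∀ y, HasEntrywiseDerivAt g (mderiv f y * T a c y + f y * Tderiv a c) y := fun y => by
    simpa only [← funext hg] using
      (hasEntrywiseDerivAt_mderiv hf₀ y).mul (hasEntrywiseDerivAt_T a c y)
  have hg₂ : HasEntrywiseDerivAt (mderiv g)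
      (mderiv (mderiv f) x * T a c x + mderiv f x * Tderiv a c
        + (mderiv f x * Tderiv a c + f x * 0)) x := by
    rw [funext fun y => (hg₁ y).mderiv_eq]
    exact ((hasEntrywiseDerivAt_mderiv hf₁ x).mul (hasEntrywiseDerivAt_T a c x)).add
      ((hasEntrywiseDerivAt_mderiv hf₀ x).mul (hasEntrywiseDerivAt_const _ x))
  rw [hg₂.mderiv_eq, (hg₁ x).mderiv_eq, hg x, F1_eq_conj a b c x, F0_eq_conj a b c x]
  conv_lhs => rw [← Matrix.mul_one (mderiv (mderiv f) x), ← T_mul_Tinv a c x]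
  simp only [Matrix.mul_add, Matrix.add_mul, Matrix.mul_assoc, two_smul, Matrix.mul_zero, add_zero]
  abel
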